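/- Let σ be a permutation of size n and let σ' be a permutation of size n+1 obtained from σ by inserting one point (not necessarily internal). Then the rectangular distance between the associated permutons satisfies d_□(μ_σ, μ_{σ'}) ≤ 6/n. -/

import Mathlib

/-!
Both permutons put mass `1/N` on the cells of a grid of mesh `1/N`, and the cell of the `m`-th
point of `σ` (mesh `1/n`) and that of the corresponding point of the inserted permutation
(mesh `1/(n+1)`) are within `1/n` of each other in each coordinate. Hence the mass of a rectangle
`R` for one permuton is bounded by the mass of `R` enlarged by `1/n` for the other, up to one
extra cell (`≤ 1/n`) in one direction and the density ratio `(n+1)/n` in the other. Since the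
marginals are uniform, enlarging `R` by `1/n` adds at most `4/n`, so the distance is `≤ 5/n`.
-/

open Equiv MeasureTheory

/-- Insertion of the point `(i, j)` into a permutation `σ` of size `n`. -/
def insertPt {n : ℕ} (σ : Equiv.Perm (Fin n)) (i j : Fin (n + 1)) :
    Equiv.Perm (Fin (n + 1)) :=
  (finSuccEquiv' i).trans ((Equiv.optionCongr σ).trans (finSuccEquiv' j).symm)

/-- The permuton `μ_σ` associated with a permutation `σ` of size `n`:
`μ_σ = n · Σ_{i=1}^n Leb([(i−1)/n, i/n] × [(σ(i)−1)/n, σ(i)/n])`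
(here positions and values are 0-based). -/
noncomputable def permuton {n : ℕ} (σ : Equiv.Perm (Fin n)) :
    Measure (ℝ × ℝ) :=
  (n : ENNReal) • ∑ i : Fin n,
    (volume.restrict
      (Set.Icc ((i : ℝ) / n) (((i : ℝ) + 1) / n) ×ˢ
       Set.Icc (((σ i : ℕ) : ℝ) / n) ((((σ i : ℕ) : ℝ) + 1) / n)))

open Finset

def overlapLen (s t u v : ℝ) : ℝ := max (min t v - max s u) 0

section overlapLen

variable {s t u v : ℝ}

lemma overlapLen_nonneg (s t u v : ℝ) : 0 ≤ overlapLen s t u v := le_max_right _ _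

lemma overlapLen_le_sub (h : u ≤ v) : overlapLen s t u v ≤ v - u :=
  max_le (by linarith [min_le_right t v, le_max_right s u]) (by linarith)

lemma overlapLen_mono {s' t' : ℝ} (hs : s' ≤ s) (ht : t ≤ t') :
    overlapLen s t u v ≤ overlapLen s' t' u v :=
  max_le_max (by linarith [min_le_min_right v ht, max_le_max_right u hs]) le_rfl

lemma overlapLen_add {w : ℝ} (huv : u ≤ v) (hvw : v ≤ w) :
    overlapLen s t u v + overlapLen s t v w = overlapLen s t u w := by
  simp only [overlapLen, _root_.max_def, _root_.min_def]
  split_ifs <;> linarith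

lemma overlapLen_sub_add_le {δ : ℝ} (hδ : 0 ≤ δ) :
    overlapLen (s - δ) (t + δ) u v ≤ overlapLen s t u v + 2 * δ := by
  simp only [overlapLen, _root_.max_def, _root_.min_def]
  split_ifs <;> linarith

lemma mul_overlapLen {r : ℝ} (hr : 0 ≤ r) :
    r * overlapLen s t u v = overlapLen (r * s) (r * t) (r * u) (r * v) := by
  simp only [overlapLen, mul_max_of_nonneg _ _ hr, mul_min_of_nonneg _ _ hr, mul_sub, mul_zero]

lemma overlapLen_add_const (c : ℝ) :
    overlapLen (s + c) (t + c) (u + c) (v + c) = overlapLen s t u v := by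
  simp only [overlapLen, min_add_add_right, max_add_add_right, add_sub_add_right_eq_sub]

end overlapLen

noncomputable def cellLen (N : ℕ) (s t : ℝ) (k : ℕ) : ℝ :=
  overlapLen s t (k / N) ((k + 1) / N)

section cellLen

variable {N : ℕ} {s t : ℝ}

lemma cellLen_nonneg (N : ℕ) (s t : ℝ) (k : ℕ) : 0 ≤ cellLen N s t k :=
  overlapLen_nonneg _ _ _ _

lemma cellLen_le (N : ℕ) (s t : ℝ) (k : ℕ) : cellLen N s t k ≤ 1 / N :=
  calc cellLen N s t k ≤ (k + 1) / N - k / N :=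
        overlapLen_le_sub (div_le_div_of_nonneg_right (by linarith) N.cast_nonneg)
    _ = 1 / N := by ring

lemma sum_cellLen (hN : 0 < N) (s t : ℝ) :
    ∑ k : Fin N, cellLen N s t k = overlapLen s t 0 1 := by
  have hN' : (N : ℝ) ≠ 0 := by positivity
  have key : ∀ K : ℕ, ∑ k ∈ range K, cellLen N s t k = overlapLen s t 0 (K / N) := by
    intro K
    induction K with
    | zero => simp [overlapLen]
    | succ K ih =>
      rw [sum_range_succ, ih, cellLen, overlapLen_add (by positivity)
        (div_le_div_of_nonneg_right (by linarith) N.cast_nonneg), Nat.cast_succ]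
  rw [Fin.sum_univ_eq_sum_range (cellLen N s t), key, div_self hN']

lemma mul_cellLen (hN : 0 < N) (s t : ℝ) (k : ℕ) :
    N * cellLen N s t k = overlapLen (N * s) (N * t) k (k + 1) := by
  have hN' : (N : ℝ) ≠ 0 := by positivity
  rw [cellLen, mul_overlapLen N.cast_nonneg, mul_div_cancel₀ _ hN', mul_div_cancel₀ _ hN']

lemma mul_cellLen_le_mul_cellLen {M : ℕ} (hN : 0 < N) (hM : 0 < M) {s' t' : ℝ} {k m : ℕ}
    (hs : M * s' + k ≤ N * s + m) (ht : N * t + m ≤ M * t' + k) :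
    N * cellLen N s t k ≤ M * cellLen M s' t' m := by
  rw [mul_cellLen hN, mul_cellLen hM, ← overlapLen_add_const ((m : ℝ) - k),
    add_sub_cancel, add_right_comm, add_sub_cancel]
  exact overlapLen_mono (by linarith) (by linarith)

end cellLen

/-- The mass of `[a, b] ×ˢ [c, d]` under `permuton τ`, see `toReal_permuton_Icc_prod_Icc`. -/
noncomputable def rectMass {N : ℕ} (τ : Perm (Fin N)) (a b c d : ℝ) : ℝ :=
  N * ∑ k : Fin N, cellLen N a b k * cellLen N c d (τ k)

section rectMass

variable {N : ℕ} (τ : Perm (Fin N))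

lemma toReal_permuton_Icc_prod_Icc (a b c d : ℝ) :
    (permuton τ (Set.Icc a b ×ˢ Set.Icc c d)).toReal = rectMass τ a b c d := by
  have hR : MeasurableSet (Set.Icc a b ×ˢ Set.Icc c d) := measurableSet_Icc.prod measurableSet_Icc
  rw [permuton, Measure.smul_apply, smul_eq_mul, Measure.finsetSum_apply, ENNReal.toReal_mul,
    ENNReal.toReal_natCast, ENNReal.toReal_sum, rectMass]
  · refine congrArg _ (sum_congr rfl fun k _ => ?_)
    rw [Measure.restrict_apply hR, Set.prod_inter_prod, Measure.volume_eq_prod,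
      Measure.prod_prod, Set.Icc_inter_Icc, Set.Icc_inter_Icc, Real.volume_Icc,
      Real.volume_Icc, ENNReal.toReal_mul, ENNReal.toReal_ofReal', ENNReal.toReal_ofReal']
    simp only [cellLen, overlapLen, min_comm b, max_comm a, min_comm d, max_comm c]
  · intro k _
    rw [Measure.restrict_apply hR]
    refine (lt_of_le_of_lt (measure_mono Set.inter_subset_right) ?_).ne
    rw [Measure.volume_eq_prod, Measure.prod_prod, Real.volume_Icc, Real.volume_Icc]
    exact ENNReal.mul_lt_top ENNReal.ofReal_lt_top ENNReal.ofReal_lt_top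

lemma rectMass_le_one (a b c d : ℝ) : rectMass τ a b c d ≤ 1 := by
  have hcell : ∀ k ∈ (univ : Finset (Fin N)),
      cellLen N a b k * cellLen N c d (τ k) ≤ 1 / N * (1 / N) := fun k _ =>
    mul_le_mul (cellLen_le _ _ _ _) (cellLen_le _ _ _ _) (cellLen_nonneg _ _ _ _) (by positivity)
  calc rectMass τ a b c d ≤ N * (N * (1 / N * (1 / N))) := by
        rw [rectMass]
        gcongr
        simpa using sum_le_card_nsmul univ _ _ hcell
    _ ≤ 1 := by
        rcases N.eq_zero_or_pos with rfl | hN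
        · simp
        · exact (by field_simp : (N : ℝ) * (N * (1 / N * (1 / N))) = 1).le

lemma rectMass_inv (a b c d : ℝ) : rectMass τ⁻¹ c d a b = rectMass τ a b c d := by
  rw [rectMass, rectMass,
    ← Equiv.sum_comp τ (fun k : Fin N => cellLen N c d k * cellLen N a b (τ⁻¹ k))]
  simp only [Perm.coe_inv, symm_apply_apply, mul_comm]

lemma rectMass_widen_le (hN : 0 < N) {δ : ℝ} (hδ : 0 ≤ δ) (a b c d : ℝ) :
    rectMass τ (a - δ) (b + δ) c d ≤ rectMass τ a b c d + 2 * δ := by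
  calc rectMass τ (a - δ) (b + δ) c d
      = rectMass τ a b c d + N * ∑ k : Fin N,
          (cellLen N (a - δ) (b + δ) k - cellLen N a b k) * cellLen N c d (τ k) := by
        simp only [rectMass, sub_mul, sum_sub_distrib]; ring
    _ ≤ rectMass τ a b c d + N * ∑ k : Fin N,
          (cellLen N (a - δ) (b + δ) k - cellLen N a b k) * (1 / N) := by
        gcongr with k
        · exact sub_nonneg.2 (overlapLen_mono (by linarith) (by linarith))
        · exact cellLen_le _ _ _ _
    _ = rectMass τ a b c d + (overlapLen (a - δ) (b + δ) 0 1 - overlapLen a b 0 1) := by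
        rw [← sum_mul, sum_sub_distrib, sum_cellLen hN, sum_cellLen hN]
        field_simp
    _ ≤ rectMass τ a b c d + 2 * δ := by
        linarith [overlapLen_sub_add_le (s := a) (t := b) (u := 0) (v := 1) hδ]

lemma rectMass_enlarge_le (hN : 0 < N) {δ : ℝ} (hδ : 0 ≤ δ) (a b c d : ℝ) :
    rectMass τ (a - δ) (b + δ) (c - δ) (d + δ) ≤ rectMass τ a b c d + 4 * δ := by
  have hy := rectMass_widen_le τ⁻¹ hN hδ c d (a - δ) (b + δ)
  rw [rectMass_inv, rectMass_inv] at hy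
  linarith [rectMass_widen_le τ hN hδ a b c d]

end rectMass

lemma mul_mul_le_div_mul_mul {N M f g F G : ℝ} (hN : 0 < N) (hf : 0 ≤ f) (hg : 0 ≤ g)
    (hfF : N * f ≤ M * F) (hgG : N * g ≤ M * G) : N * (f * g) ≤ M / N * (M * (F * G)) := by
  rw [div_mul_eq_mul_div, le_div_iff₀ hN]
  calc N * (f * g) * N = (N * f) * (N * g) := by ring
    _ ≤ (M * F) * (M * G) := mul_le_mul hfF hgG (by positivity) (by nlinarith)
    _ = M * (M * (F * G)) := by ring

lemma Fin.val_le_val_succAbove {n : ℕ} (i : Fin (n + 1)) (m : Fin n) :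
    (m : ℕ) ≤ i.succAbove m ∧ (i.succAbove m : ℕ) ≤ m + 1 := by
  rcases lt_or_ge m.castSucc i with h | h
  · simp [Fin.succAbove_of_castSucc_lt _ _ h]
  · simp [Fin.succAbove_of_le_castSucc _ _ h]

section insertPt

variable {n : ℕ} (σ : Perm (Fin n)) (i j : Fin (n + 1))

lemma insertPt_apply_self : insertPt σ i j i = j := by
  simp [insertPt]

lemma insertPt_apply_succAbove (m : Fin n) :
    insertPt σ i j (i.succAbove m) = j.succAbove (σ m) := by
  simp [insertPt, finSuccEquiv'_succAbove]

variable {a b : ℝ}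

lemma succ_mul_cellLen_succAbove_le (hn : 0 < n) (ha : 0 ≤ a) (hb : b ≤ 1) (m : Fin n) :
    ((n : ℝ) + 1) * cellLen (n + 1) a b (i.succAbove m) ≤
      n * cellLen n (a - 1 / n) (b + 1 / n) m := by
  have hinv : (n : ℝ) * (1 / n) = 1 := by field_simp
  obtain ⟨hm, hm'⟩ := Fin.val_le_val_succAbove i m
  have hm : (m : ℝ) ≤ (i.succAbove m : ℕ) := by exact_mod_cast hm
  have hm' : ((i.succAbove m : ℕ) : ℝ) ≤ m + 1 := by exact_mod_cast hm'
  rw [← Nat.cast_succ]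
  refine mul_cellLen_le_mul_cellLen n.succ_pos hn ?_ ?_ <;> push_cast <;> nlinarith

lemma mul_cellLen_le_succ_mul_cellLen_succAbove (hn : 0 < n) (ha : a ≤ 1) (hb : 0 ≤ b)
    (m : Fin n) :
    n * cellLen n a b m ≤
      ((n : ℝ) + 1) * cellLen (n + 1) (a - 1 / n) (b + 1 / n) (i.succAbove m) := by
  have hinv : ((n : ℝ) + 1) * (1 / n) = 1 + 1 / n := by field_simp
  obtain ⟨hm, hm'⟩ := Fin.val_le_val_succAbove i m
  have hm : (m : ℝ) ≤ (i.succAbove m : ℕ) := by exact_mod_cast hm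
  have hm' : ((i.succAbove m : ℕ) : ℝ) ≤ m + 1 := by exact_mod_cast hm'
  rw [← Nat.cast_succ]
  refine mul_cellLen_le_mul_cellLen hn n.succ_pos ?_ ?_ <;> push_cast <;> nlinarith

lemma rectMass_insertPt (a b c d : ℝ) :
    rectMass (insertPt σ i j) a b c d =
      ((n : ℝ) + 1) * (cellLen (n + 1) a b i * cellLen (n + 1) c d j) +
        ∑ m : Fin n, ((n : ℝ) + 1) *
          (cellLen (n + 1) a b (i.succAbove m) * cellLen (n + 1) c d (j.succAbove (σ m))) := by
  rw [rectMass, Fin.sum_univ_succAbove _ i, mul_add, mul_sum]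
  simp only [insertPt_apply_self, insertPt_apply_succAbove, Nat.cast_succ]

variable {c d : ℝ} (hn : 0 < n)
include hn

lemma rectMass_insertPt_le (ha : 0 ≤ a) (hb : b ≤ 1) (hc : 0 ≤ c) (hd : d ≤ 1) :
    rectMass (insertPt σ i j) a b c d ≤
      1 / n + rectMass σ (a - 1 / n) (b + 1 / n) (c - 1 / n) (d + 1 / n) := by
  have hn' : (0 : ℝ) < n := by exact_mod_cast hn
  have hcorner : ((n : ℝ) + 1) * (cellLen (n + 1) a b i * cellLen (n + 1) c d j) ≤ 1 / n :=
    calc ((n : ℝ) + 1) * (cellLen (n + 1) a b i * cellLen (n + 1) c d j)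
        ≤ ((n : ℝ) + 1) * (1 / (n + 1) * (1 / (n + 1))) := by
          gcongr
          · exact cellLen_nonneg _ _ _ _
          · exact_mod_cast cellLen_le _ _ _ _
          · exact_mod_cast cellLen_le _ _ _ _
      _ = 1 / (n + 1) := by field_simp
      _ ≤ 1 / n := by gcongr; linarith
  have hcell : ∀ m : Fin n,
      ((n : ℝ) + 1) *
          (cellLen (n + 1) a b (i.succAbove m) * cellLen (n + 1) c d (j.succAbove (σ m))) ≤
        n * (cellLen n (a - 1 / n) (b + 1 / n) m * cellLen n (c - 1 / n) (d + 1 / n) (σ m)) := by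
    intro m
    refine (mul_mul_le_div_mul_mul (by positivity) (cellLen_nonneg _ _ _ _)
      (cellLen_nonneg _ _ _ _) (succ_mul_cellLen_succAbove_le i hn ha hb m)
      (succ_mul_cellLen_succAbove_le j hn hc hd (σ m))).trans ?_
    refine mul_le_of_le_one_left
      (mul_nonneg hn'.le (mul_nonneg (cellLen_nonneg _ _ _ _) (cellLen_nonneg _ _ _ _))) ?_
    rw [div_le_one (by positivity)]
    linarith
  rw [rectMass_insertPt, rectMass, mul_sum]
  exact add_le_add hcorner (sum_le_sum fun m _ => hcell m)

lemma rectMass_le_rectMass_insertPt (ha : a ≤ 1) (hb : 0 ≤ b) (hc : c ≤ 1) (hd : 0 ≤ d) :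
    rectMass σ a b c d ≤
      ((n : ℝ) + 1) / n *
        rectMass (insertPt σ i j) (a - 1 / n) (b + 1 / n) (c - 1 / n) (d + 1 / n) := by
  have hn' : (0 : ℝ) < n := by exact_mod_cast hn
  rw [rectMass_insertPt, rectMass, mul_sum, mul_add, mul_sum]
  refine le_add_of_nonneg_of_le (mul_nonneg (by positivity)
    (mul_nonneg (by positivity) (mul_nonneg (cellLen_nonneg _ _ _ _) (cellLen_nonneg _ _ _ _))))
    (sum_le_sum fun m _ => ?_)
  exact mul_mul_le_div_mul_mul hn' (cellLen_nonneg _ _ _ _) (cellLen_nonneg _ _ _ _)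
    (mul_cellLen_le_succ_mul_cellLen_succAbove i hn ha hb m)
    (mul_cellLen_le_succ_mul_cellLen_succAbove j hn hc hd (σ m))

end insertPt

/-- if `σ'` is obtained from a permutation `σ` of size `n ≥ 1` by
inserting one point (not necessarily internal), then for every axis-parallel
rectangle `R ⊆ [0,1]²` one has `|μ_σ(R) − μ_{σ'}(R)| ≤ 6/n`; that is,
`d_□(μ_σ, μ_{σ'}) ≤ 6/n`. -/
theorem permuton_insertion_distance {n : ℕ} (hn : 0 < n)
    (σ : Equiv.Perm (Fin n)) (i j : Fin (n + 1)) :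
    ∀ a b c d : ℝ, a ∈ Set.Icc (0:ℝ) 1 → b ∈ Set.Icc (0:ℝ) 1 →
      c ∈ Set.Icc (0:ℝ) 1 → d ∈ Set.Icc (0:ℝ) 1 →
      |(permuton σ (Set.Icc a b ×ˢ Set.Icc c d)).toReal -
        (permuton (insertPt σ i j) (Set.Icc a b ×ˢ Set.Icc c d)).toReal| ≤ 6 / n := by
  rintro a b c d ⟨ha0, ha1⟩ ⟨hb0, hb1⟩ ⟨hc0, hc1⟩ ⟨hd0, hd1⟩
  rw [toReal_permuton_Icc_prod_Icc, toReal_permuton_Icc_prod_Icc]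
  have hδ : (0 : ℝ) < 1 / n := by positivity
  have hYX := rectMass_insertPt_le σ i j hn ha0 hb1 hc0 hd1
  have hXY := rectMass_le_rectMass_insertPt σ i j hn ha1 hb0 hc1 hd0
  have hX := rectMass_enlarge_le σ hn hδ.le a b c d
  have hY := rectMass_enlarge_le (insertPt σ i j) n.succ_pos hδ.le a b c d
  have hY1 := mul_le_of_le_one_right hδ.le
    (rectMass_le_one (insertPt σ i j) (a - 1 / n) (b + 1 / n) (c - 1 / n) (d + 1 / n))
  have hsplit : ((n : ℝ) + 1) / n = 1 + 1 / n := by field_simp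
  rw [hsplit, add_mul, one_mul] at hXY
  rw [abs_sub_le_iff, div_eq_mul_one_div 6]
  constructor <;> linarith
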